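/- arXiv:1405.4146 — 2 statements merged into one kernel-verified Lean document; each statement's English description precedes it below -/
import Mathlib

section
/- Suppose a symmetric matrix H(k) satisfies: H(k) is positive definite for all k, direction Δx(k) satisfies (Δx(k))ᵀ H(k) Δx(k) = −(Δx(k))ᵀ ∇f(x(k)) with ∇f(x(k)) ≠ 0, and f is twice continuously differentiable with ∇²f ⪯ λ_max(H(k))·I along the segment. Then the step-size ᾱ = 1/κ(H(k)) satisfies f(x(k) + ᾱΔx(k)) ≤ f(x(k)) − (1/(2κ(H(k))))·(Δx(k))ᵀ H(k) Δx(k), where κ(H) is the condition number of H. -/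
/-!
Restricted to the segment, the Hessian bound gives the quadratic upper model
`f (x + v) ≤ f x + ⟪∇f x, v⟫ + lmax ‖v‖² / 2` (integrate the second derivative of
`t ↦ f (x + t • v)` twice). Take `v = α • Δx` with `α = lmin / lmax = 1 / κ`; testing the
spectral bounds on the nonzero gradient gives `lmin ≤ lmax`, so `α ≤ 1` and the step stays on
the segment. Then `lmax α² ‖Δx‖² = α lmin ‖Δx‖² ≤ α ⟪Δx, H Δx⟫`, while the Galerkin identity
turns the linear term into `-α ⟪Δx, H Δx⟫`, leaving a decrease of `(α / 2) ⟪Δx, H Δx⟫`.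
-/

open scoped RealInnerProductSpace
open Set

theorem image_one_le_of_secondDeriv_le {g g' g'' : ℝ → ℝ} {C : ℝ}
    (hg : ∀ t, HasDerivAt g (g' t) t) (hg' : ∀ t, HasDerivAt g' (g'' t) t)
    (hC : ∀ t ∈ Ioo (0 : ℝ) 1, g'' t ≤ C) :
    g 1 ≤ g 0 + g' 0 + C / 2 := by
  have hslope : AntitoneOn (fun t => g' t - C * t) (Icc 0 1) := by
    have hd t := (hg' t).sub ((hasDerivAt_id t).const_mul C)
    refine antitoneOn_of_hasDerivWithinAt_nonpos (convex_Icc 0 1)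
      (fun t _ => (hd t).continuousAt.continuousWithinAt)
      (fun t _ => (hd t).hasDerivWithinAt) fun t ht => ?_
    rw [interior_Icc] at ht
    simpa using hC t ht
  have hgap : AntitoneOn (fun t => g t - t * g' 0 - C / 2 * t ^ 2) (Icc 0 1) := by
    have hd t : HasDerivAt (fun t => g t - t * g' 0 - C / 2 * t ^ 2)
        (g' t - g' 0 - C * t) t :=
      (((hg t).sub ((hasDerivAt_id t).mul_const (g' 0))).sub
        ((hasDerivAt_pow 2 t).const_mul (C / 2))).congr_deriv (by ring)
    refine antitoneOn_of_hasDerivWithinAt_nonpos (convex_Icc 0 1)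
      (fun t _ => (hd t).continuousAt.continuousWithinAt)
      (fun t _ => (hd t).hasDerivWithinAt) fun t ht => ?_
    rw [interior_Icc] at ht
    have := hslope (left_mem_Icc.2 zero_le_one) (Ioo_subset_Icc_self ht) ht.1.le
    simp only [mul_zero, sub_zero] at this
    linarith
  have := hgap (left_mem_Icc.2 zero_le_one) (right_mem_Icc.2 zero_le_one) zero_le_one
  simp only at this
  linarith

theorem DifferentiableAt.hasDerivAt_comp_add_smul {E F : Type*} [NormedAddCommGroup E]
    [NormedSpace ℝ E] [NormedAddCommGroup F] [NormedSpace ℝ F] {g : E → F} {x v : E} {t : ℝ}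
    (hg : DifferentiableAt ℝ g (x + t • v)) :
    HasDerivAt (fun s : ℝ => g (x + s • v)) (fderiv ℝ g (x + t • v) v) t :=
  hg.hasFDerivAt.comp_hasDerivAt t (by simpa using ((hasDerivAt_id t).smul_const v).const_add x)

section Gradient

variable {E : Type*} [NormedAddCommGroup E] [InnerProductSpace ℝ E] [CompleteSpace E]

theorem ContDiff.differentiable_gradient {f : E → ℝ} (hf : ContDiff ℝ 2 f) :
    Differentiable ℝ (gradient f) := by
  have hgrad : gradient f = (InnerProductSpace.toDual ℝ E).symm ∘ fderiv ℝ f := by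
    rw [← toDual_comp_gradient, ← Function.comp_assoc, LinearIsometryEquiv.symm_comp_self,
      Function.id_comp]
  rw [hgrad]
  exact (InnerProductSpace.toDual ℝ E).symm.differentiable.comp
    ((hf.fderiv_right (m := 1) (by norm_num)).differentiable one_ne_zero)

theorem le_add_inner_gradient_add_half_of_hessian_le {f : E → ℝ} (hf : ContDiff ℝ 2 f)
    (x v : E) {C : ℝ}
    (hC : ∀ t ∈ Ioo (0 : ℝ) 1, ⟪fderiv ℝ (gradient f) (x + t • v) v, v⟫ ≤ C) :
    f (x + v) ≤ f x + ⟪gradient f x, v⟫ + C / 2 := by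
  have hf' : Differentiable ℝ f := hf.differentiable (by norm_num)
  have hgrad' := hf.differentiable_gradient
  simpa using image_one_le_of_secondDeriv_le (g := fun t => f (x + t • v))
    (fun t => by simpa only [inner_gradient_left] using (hf' _).hasDerivAt_comp_add_smul)
    (fun t => ((hgrad' _).hasDerivAt_comp_add_smul.inner ℝ (hasDerivAt_const t v)).congr_deriv
      (by simp)) hC

end Gradient

theorem linesearch_decrease_general {n : ℕ} (f : EuclideanSpace ℝ (Fin n) → ℝ)
    (H : EuclideanSpace ℝ (Fin n) →L[ℝ] EuclideanSpace ℝ (Fin n))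
    (x Δx : EuclideanSpace ℝ (Fin n)) (lmin lmax : ℝ)
    (hf : ContDiff ℝ 2 f)
    (hlmin : 0 < lmin)
    (hmin : ∀ v, lmin * ‖v‖ ^ 2 ≤ ⟪H v, v⟫)
    (hmax : ∀ v, ⟪H v, v⟫ ≤ lmax * ‖v‖ ^ 2)
    (hgrad : gradient f x ≠ 0)
    (hdir : ⟪Δx, H Δx⟫ = -⟪Δx, gradient f x⟫)
    (hhess : ∀ t ∈ Set.Icc (0 : ℝ) 1, ∀ v,
      ⟪(fderiv ℝ (gradient f) (x + t • Δx)) v, v⟫ ≤ lmax * ‖v‖ ^ 2) :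
    f (x + (1 / (lmax / lmin)) • Δx) ≤ f x - 1 / (2 * (lmax / lmin)) * ⟪Δx, H Δx⟫ := by
  have hlmin_le : lmin ≤ lmax := le_of_mul_le_mul_right ((hmin _).trans (hmax _))
    (pow_pos (norm_pos_iff.2 hgrad) 2)
  have hlmax : 0 < lmax := hlmin.trans_le hlmin_le
  set α := lmin / lmax with hα
  have hα_pos : 0 < α := div_pos hlmin hlmax
  have hα_le_one : α ≤ 1 := (div_le_one hlmax).2 hlmin_le
  rw [one_div_div, ← hα, show 1 / (2 * (lmax / lmin)) = α / 2 by rw [hα]; field_simp]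
  have hmodel := le_add_inner_gradient_add_half_of_hessian_le hf x (α • Δx)
    (C := lmax * ‖α • Δx‖ ^ 2) fun t ht => by
      simpa only [smul_smul] using hhess (t * α)
        ⟨by nlinarith [ht.1], by nlinarith [ht.2]⟩ (α • Δx)
  have hcurv : lmax * ‖α • Δx‖ ^ 2 ≤ α * ⟪Δx, H Δx⟫ :=
    calc lmax * ‖α • Δx‖ ^ 2 = α * (lmin * ‖Δx‖ ^ 2) := by
          rw [norm_smul, Real.norm_of_nonneg hα_pos.le, hα]; field_simp
      _ ≤ α * ⟪Δx, H Δx⟫ := by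
          rw [real_inner_comm]; exact mul_le_mul_of_nonneg_left (hmin Δx) hα_pos.le
  have hslope : ⟪gradient f x, α • Δx⟫ = -(α * ⟪Δx, H Δx⟫) := by
    rw [real_inner_smul_right, real_inner_comm, hdir, mul_neg, neg_neg]
  linarith

theorem linesearch_decrease {n : ℕ} (f : EuclideanSpace ℝ (Fin n) → ℝ)
    (H : EuclideanSpace ℝ (Fin n) →L[ℝ] EuclideanSpace ℝ (Fin n))
    (x Δx : EuclideanSpace ℝ (Fin n)) (lmin lmax : ℝ)
    (hf : ContDiff ℝ 2 f)
    (hsym : ∀ u v, ⟪H u, v⟫ = ⟪u, H v⟫)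
    (hlmin : 0 < lmin)
    (hmin : ∀ v, lmin * ‖v‖ ^ 2 ≤ ⟪H v, v⟫)
    (hmax : ∀ v, ⟪H v, v⟫ ≤ lmax * ‖v‖ ^ 2)
    (hgrad : gradient f x ≠ 0)
    (hdir : ⟪Δx, H Δx⟫ = -⟪Δx, gradient f x⟫)
    (hhess : ∀ t ∈ Set.Icc (0 : ℝ) 1, ∀ v,
      ⟪(fderiv ℝ (gradient f) (x + t • Δx)) v, v⟫ ≤ lmax * ‖v‖ ^ 2) :
    f (x + (1 / (lmax / lmin)) • Δx) ≤ f x - 1 / (2 * (lmax / lmin)) * ⟪Δx, H Δx⟫ :=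
  linesearch_decrease_general f H x Δx lmin lmax hf hlmin hmin hmax hgrad hdir hhess
end

section
/- Let f : ℝⁿ → ℝ be twice continuously differentiable with ∇²f Lipschitz continuous (constant L), let x* satisfy ∇f(x*) = 0 with ∇²f(x*) positive definite, and let iterates satisfy x^{k+1} = x^k + Δx^k where ‖∇²f(x^k)Δx^k + ∇f(x^k)‖₂ ≤ η_k ‖∇f(x^k)‖₂ with η_k → 0. Then if x^k → x*, the convergence is superlinear: ‖x^{k+1} − x*‖ / ‖x^k − x*‖ → 0. -/
open scoped RealInnerProductSpace
open Filter Topology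

/-!
Write `e = x - x*` and `H = ∇²f`. The Lipschitz Hessian gives the Taylor bounds
`‖H(x) e - ∇f(x)‖ ≤ L‖e‖²` and `‖∇f(x)‖ ≤ (‖H(x*)‖ + L‖e‖)‖e‖`, while positive definiteness
makes `H(x*)` bounded below by some `m > 0` (finite dimension), hence `H(x)` bounded below by
`m - L‖e‖`. Splitting `H(x)(e + Δx) = (H(x)Δx + ∇f(x)) + (H(x)e - ∇f(x))` into the inexact-Newton
residual and the Taylor remainder gives, for the next error `e⁺`,
`(m - L‖e‖)‖e⁺‖ ≤ (L‖e‖ + η(‖H(x*)‖ + L‖e‖))‖e‖`, and the factor tends to `0` with `e` and `η`.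
-/

section Calculus

variable {E F : Type*} [NormedAddCommGroup E] [NormedSpace ℝ E]
  [NormedAddCommGroup F] [NormedSpace ℝ F]

theorem norm_sub_sub_fderiv_le_of_lipschitz_fderiv {g : E → F} (hg : Differentiable ℝ g)
    {L : ℝ} (hlip : ∀ a b, ‖fderiv ℝ g a - fderiv ℝ g b‖ ≤ L * ‖a - b‖) (a y : E) :
    ‖g y - g a - fderiv ℝ g a (y - a)‖ ≤ L * ‖y - a‖ * ‖y - a‖ := by
  refine Convex.norm_image_sub_le_of_norm_fderiv_le' (fun z _ => hg z) ?_
    (convex_segment a y) (left_mem_segment ℝ a y) (right_mem_segment ℝ a y)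
  rw [segment_eq_image']
  rintro _ ⟨t, ⟨ht0, ht1⟩, rfl⟩
  have hLy : 0 ≤ L * ‖y - a‖ := (norm_nonneg _).trans (hlip y a)
  calc ‖fderiv ℝ g (a + t • (y - a)) - fderiv ℝ g a‖
      ≤ L * ‖a + t • (y - a) - a‖ := hlip _ _
    _ = t * (L * ‖y - a‖) := by
        rw [add_sub_cancel_left, norm_smul, Real.norm_of_nonneg ht0]; ring
    _ ≤ L * ‖y - a‖ := mul_le_of_le_one_left hLy ht1

theorem norm_le_of_lipschitz_fderiv {g : E → F} (hg : Differentiable ℝ g) {L : ℝ}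
    (hlip : ∀ a b, ‖fderiv ℝ g a - fderiv ℝ g b‖ ≤ L * ‖a - b‖) {xs : E} (hzero : g xs = 0)
    (x : E) : ‖g x‖ ≤ (‖fderiv ℝ g xs‖ + L * ‖x - xs‖) * ‖x - xs‖ := by
  have htaylor := norm_sub_sub_fderiv_le_of_lipschitz_fderiv hg hlip xs x
  rw [hzero, sub_zero] at htaylor
  calc ‖g x‖ = ‖(g x - fderiv ℝ g xs (x - xs)) + fderiv ℝ g xs (x - xs)‖ := by
        rw [sub_add_cancel]
    _ ≤ L * ‖x - xs‖ * ‖x - xs‖ + ‖fderiv ℝ g xs‖ * ‖x - xs‖ :=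
        norm_add_le_of_le htaylor ((fderiv ℝ g xs).le_opNorm _)
    _ = (‖fderiv ℝ g xs‖ + L * ‖x - xs‖) * ‖x - xs‖ := by ring

theorem norm_newton_residual_le_of_lipschitz_fderiv {g : E → F} (hg : Differentiable ℝ g)
    {L : ℝ} (hlip : ∀ a b, ‖fderiv ℝ g a - fderiv ℝ g b‖ ≤ L * ‖a - b‖) {xs : E}
    (hzero : g xs = 0) (x : E) :
    ‖fderiv ℝ g x (x - xs) - g x‖ ≤ L * ‖x - xs‖ * ‖x - xs‖ := by
  have htaylor := norm_sub_sub_fderiv_le_of_lipschitz_fderiv hg hlip x xs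
  rw [hzero, norm_sub_rev xs x, ← neg_sub x xs, map_neg] at htaylor
  calc ‖fderiv ℝ g x (x - xs) - g x‖ = ‖0 - g x - -fderiv ℝ g x (x - xs)‖ := by
        rw [zero_sub, sub_neg_eq_add, neg_add_eq_sub]
    _ ≤ L * ‖x - xs‖ * ‖x - xs‖ := htaylor

end Calculus

section LinearAlgebra

variable {𝕜 E F : Type*} [NontriviallyNormedField 𝕜] [NormedAddCommGroup E] [NormedSpace 𝕜 E]
  [NormedAddCommGroup F] [NormedSpace 𝕜 F]

theorem ContinuousLinearMap.exists_pos_mul_norm_le_of_injective [CompleteSpace 𝕜]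
    [FiniteDimensional 𝕜 E] (S : E →L[𝕜] F) (hS : Function.Injective S) :
    ∃ m > 0, ∀ v, m * ‖v‖ ≤ ‖S v‖ := by
  obtain ⟨K, hK, hanti⟩ := (S : E →ₗ[𝕜] F).injective_iff_antilipschitz.mp hS
  refine ⟨(K : ℝ)⁻¹, by positivity, fun v => ?_⟩
  rw [inv_mul_le_iff₀ (by positivity)]
  exact S.bound_of_antilipschitz hanti v

theorem ContinuousLinearMap.sub_mul_norm_le_of_norm_sub_le {S T : E →L[𝕜] F} {m δ : ℝ}
    (hS : ∀ v, m * ‖v‖ ≤ ‖S v‖) (hST : ‖S - T‖ ≤ δ) (v : E) : (m - δ) * ‖v‖ ≤ ‖T v‖ := by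
  have hdiff : ‖S v - T v‖ ≤ δ * ‖v‖ :=
    ((S - T).le_opNorm v).trans (mul_le_mul_of_nonneg_right hST (norm_nonneg v))
  linarith [hS v, norm_sub_norm_le (S v) (T v)]

end LinearAlgebra

theorem ContinuousLinearMap.injective_of_forall_inner_apply_pos {E : Type*}
    [NormedAddCommGroup E] [InnerProductSpace ℝ E] (T : E →L[ℝ] E)
    (hT : ∀ v, v ≠ 0 → 0 < ⟪T v, v⟫) : Function.Injective T := by
  refine (injective_iff_map_eq_zero T).mpr fun v hv => ?_
  by_contra hne
  simpa [hv] using hT v hne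

theorem ContDiff.gradient {F : Type*} [NormedAddCommGroup F] [InnerProductSpace ℝ F]
    [CompleteSpace F] {f : F → ℝ} {m n : WithTop ℕ∞} (hf : ContDiff ℝ n f) (hmn : m + 1 ≤ n) :
    ContDiff ℝ m (gradient f) :=
  (InnerProductSpace.toDual ℝ F).symm.contDiff.comp (hf.fderiv_right hmn)

theorem tendsto_div_of_le_mul {α : Type*} {l : Filter α} {u v c : α → ℝ}
    (hc : Tendsto c l (𝓝 0)) (hu : ∀ a, 0 ≤ u a) (hv : ∀ a, 0 ≤ v a)
    (hvu : ∀ᶠ a in l, v a ≤ c a * u a) : Tendsto (fun a => v a / u a) l (𝓝 0) := by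
  refine squeeze_zero' (.of_forall fun a => div_nonneg (hv a) (hu a)) ?_ (by simpa using hc.abs)
  filter_upwards [hvu] with a ha
  rcases (hu a).eq_or_lt with h0 | hpos
  · simp [← h0]
  · rw [div_le_iff₀ hpos]
    exact ha.trans (mul_le_mul_of_nonneg_right (le_abs_self _) (hu a))

section InexactNewton

variable {E F : Type*} [NormedAddCommGroup E] [NormedSpace ℝ E]
  [NormedAddCommGroup F] [NormedSpace ℝ F]
  {g : E → F} {L m η : ℝ} {xs : E}

theorem inexact_newton_step_error_le (hg : Differentiable ℝ g)
    (hlip : ∀ a b, ‖fderiv ℝ g a - fderiv ℝ g b‖ ≤ L * ‖a - b‖) (hzero : g xs = 0)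
    (hS : ∀ v, m * ‖v‖ ≤ ‖fderiv ℝ g xs v‖) (hη : 0 ≤ η) {x Δx : E}
    (hres : ‖fderiv ℝ g x Δx + g x‖ ≤ η * ‖g x‖) :
    (m - L * ‖x - xs‖) * ‖x + Δx - xs‖
      ≤ (L * ‖x - xs‖ + η * (‖fderiv ℝ g xs‖ + L * ‖x - xs‖)) * ‖x - xs‖ := by
  have hlower := ContinuousLinearMap.sub_mul_norm_le_of_norm_sub_le hS
    ((hlip xs x).trans_eq (by rw [norm_sub_rev])) (x + Δx - xs)
  have hsplit : fderiv ℝ g x (x + Δx - xs)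
      = (fderiv ℝ g x Δx + g x) + (fderiv ℝ g x (x - xs) - g x) := by
    rw [add_sub_right_comm, map_add]; abel
  have hgx := mul_le_mul_of_nonneg_left (norm_le_of_lipschitz_fderiv hg hlip hzero x) hη
  calc (m - L * ‖x - xs‖) * ‖x + Δx - xs‖ ≤ ‖fderiv ℝ g x (x + Δx - xs)‖ := hlower
    _ ≤ η * ‖g x‖ + L * ‖x - xs‖ * ‖x - xs‖ := by
        rw [hsplit]
        exact norm_add_le_of_le hres
          (norm_newton_residual_le_of_lipschitz_fderiv hg hlip hzero x)
    _ ≤ (L * ‖x - xs‖ + η * (‖fderiv ℝ g xs‖ + L * ‖x - xs‖)) * ‖x - xs‖ := by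
        linarith

theorem tendsto_inexact_newton_error_ratio (hg : Differentiable ℝ g)
    (hlip : ∀ a b, ‖fderiv ℝ g a - fderiv ℝ g b‖ ≤ L * ‖a - b‖) (hzero : g xs = 0)
    (hm : 0 < m) (hS : ∀ v, m * ‖v‖ ≤ ‖fderiv ℝ g xs v‖)
    {x Δx : ℕ → E} {η : ℕ → ℝ} (hη0 : ∀ k, 0 ≤ η k) (hη : Tendsto η atTop (𝓝 0))
    (hstep : ∀ k, x (k + 1) = x k + Δx k)
    (hres : ∀ k, ‖fderiv ℝ g (x k) (Δx k) + g (x k)‖ ≤ η k * ‖g (x k)‖)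
    (hconv : Tendsto x atTop (𝓝 xs)) :
    Tendsto (fun k => ‖x (k + 1) - xs‖ / ‖x k - xs‖) atTop (𝓝 0) := by
  set e := fun k => ‖x k - xs‖
  have he : Tendsto (fun k => L * e k) atTop (𝓝 0) := by
    simpa using (tendsto_iff_norm_sub_tendsto_zero.mp hconv).const_mul L
  have hdenom : Tendsto (fun k => m - L * e k) atTop (𝓝 m) := by
    simpa using tendsto_const_nhds.sub he
  have hrate : Tendsto (fun k => (L * e k + η k * (‖fderiv ℝ g xs‖ + L * e k)) / (m - L * e k))
      atTop (𝓝 0) := by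
    simpa [Pi.div_def] using (he.add (hη.mul (tendsto_const_nhds.add he))).div hdenom hm.ne'
  refine tendsto_div_of_le_mul hrate (fun k => norm_nonneg _) (fun k => norm_nonneg _) ?_
  filter_upwards [hdenom.eventually_const_lt hm] with k hk
  rw [div_mul_eq_mul_div, le_div_iff₀ hk, mul_comm, hstep k]
  exact inexact_newton_step_error_le hg hlip hzero hS (hη0 k) (hres k)

end InexactNewton

theorem inexact_newton_superlinear_general {n : ℕ} (f : EuclideanSpace ℝ (Fin n) → ℝ)
    (L : ℝ) (hf : ContDiff ℝ 2 f)
    (hlip : ∀ x y, ‖fderiv ℝ (gradient f) x - fderiv ℝ (gradient f) y‖ ≤ L * ‖x - y‖)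
    (xs : EuclideanSpace ℝ (Fin n)) (hcrit : gradient f xs = 0)
    (hpd : ∀ v, v ≠ 0 → 0 < ⟪(fderiv ℝ (gradient f) xs) v, v⟫)
    (x Δx : ℕ → EuclideanSpace ℝ (Fin n)) (η : ℕ → ℝ) (hη0 : ∀ k, 0 ≤ η k)
    (hη : Filter.Tendsto η Filter.atTop (nhds 0))
    (hstep : ∀ k, x (k + 1) = x k + Δx k)
    (hres : ∀ k, ‖(fderiv ℝ (gradient f) (x k)) (Δx k) + gradient f (x k)‖
      ≤ η k * ‖gradient f (x k)‖)
    (hconv : Filter.Tendsto x Filter.atTop (nhds xs)) :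
    Filter.Tendsto (fun k => ‖x (k + 1) - xs‖ / ‖x k - xs‖) Filter.atTop (nhds 0) := by
  have hg : Differentiable ℝ (gradient f) :=
    (hf.gradient (m := 1) le_rfl).differentiable one_ne_zero
  obtain ⟨m, hm, hS⟩ := (fderiv ℝ (gradient f) xs).exists_pos_mul_norm_le_of_injective
    ((fderiv ℝ (gradient f) xs).injective_of_forall_inner_apply_pos hpd)
  exact tendsto_inexact_newton_error_ratio hg hlip hcrit hm hS hη0 hη hstep hres hconv

theorem inexact_newton_superlinear {n : ℕ} (f : EuclideanSpace ℝ (Fin n) → ℝ)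
    (L : ℝ) (hL : 0 < L) (hf : ContDiff ℝ 2 f)
    (hlip : ∀ x y, ‖fderiv ℝ (gradient f) x - fderiv ℝ (gradient f) y‖ ≤ L * ‖x - y‖)
    (xs : EuclideanSpace ℝ (Fin n)) (hcrit : gradient f xs = 0)
    (hpd : ∀ v, v ≠ 0 → 0 < ⟪(fderiv ℝ (gradient f) xs) v, v⟫)
    (x Δx : ℕ → EuclideanSpace ℝ (Fin n)) (η : ℕ → ℝ) (hη0 : ∀ k, 0 ≤ η k)
    (hη : Filter.Tendsto η Filter.atTop (nhds 0))
    (hstep : ∀ k, x (k + 1) = x k + Δx k)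
    (hres : ∀ k, ‖(fderiv ℝ (gradient f) (x k)) (Δx k) + gradient f (x k)‖
      ≤ η k * ‖gradient f (x k)‖)
    (hconv : Filter.Tendsto x Filter.atTop (nhds xs)) :
    Filter.Tendsto (fun k => ‖x (k + 1) - xs‖ / ‖x k - xs‖) Filter.atTop (nhds 0) :=
  inexact_newton_superlinear_general f L hf hlip xs hcrit hpd x Δx η hη0 hη hstep hres hconv
end
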